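/- The downweighting function x B''(x) = (1/γ) x^{1+β} log(1 + γ/x) is strictly increasing on (0, ∞), for 0 < β ≤ 1 and 0 < γ ≤ 1. -/

import Mathlib

/-! Substituting `t = γ / x` gives `x log (1 + γ / x) = γ · log (1 + t) / t`, and `log (1 + t) / t`
is the slope of the secant of the strictly concave `log` between `1` and `1 + t`, hence strictly
decreasing in `t`; so `x log (1 + γ / x)` is positive and strictly increasing in `x`. Multiplying
by the positive, strictly increasing factor `x ^ β / γ` keeps it strictly increasing. -/

open Real Set

theorem StrictMonoOn.mul {α M₀ : Type*} [MulZeroClass M₀] [PartialOrder M₀]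
    [PosMulStrictMono M₀] [MulPosStrictMono M₀] [Preorder α] {s : Set α} {f g : α → M₀}
    (hf : StrictMonoOn f s) (hg : StrictMonoOn g s) (hf₀ : ∀ x ∈ s, 0 ≤ f x)
    (hg₀ : ∀ x ∈ s, 0 ≤ g x) : StrictMonoOn (f * g) s :=
  fun _ ha _ hb h ↦ mul_lt_mul'' (hf ha hb h) (hg ha hb h) (hf₀ _ ha) (hg₀ _ ha)

theorem Real.strictAntiOn_log_one_add_div_self :
    StrictAntiOn (fun t : ℝ ↦ log (1 + t) / t) (Ioi 0) := by
  intro s (hs : 0 < s) t (ht : 0 < t) hst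
  have := strictConcaveOn_log_Ioi.secant_strict_mono (a := 1) (x := 1 + s) (y := 1 + t)
    (mem_Ioi.mpr one_pos) (by simp only [mem_Ioi]; linarith) (by simp only [mem_Ioi]; linarith)
    (by linarith) (by linarith) (by linarith)
  simpa using this

theorem Real.mul_log_one_add_div_pos {γ x : ℝ} (hγ : 0 < γ) (hx : 0 < x) :
    0 < x * log (1 + γ / x) :=
  mul_pos hx (log_pos (lt_add_of_pos_right 1 (div_pos hγ hx)))

theorem Real.strictMonoOn_mul_log_one_add_div {γ : ℝ} (hγ : 0 < γ) :
    StrictMonoOn (fun x : ℝ ↦ x * log (1 + γ / x)) (Ioi 0) := by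
  intro a (ha : 0 < a) b (hb : 0 < b) hab
  have hslope := strictAntiOn_log_one_add_div_self (div_pos hγ hb) (div_pos hγ ha)
    (div_lt_div_of_pos_left hγ ha hab)
  simp only [div_div_eq_mul_div] at hslope
  rw [div_lt_div_iff_of_pos_right hγ] at hslope
  linarith

theorem stmt_1_general (β γ : ℝ) (hβ0 : 0 < β) (hγ0 : 0 < γ) :
    StrictMonoOn (fun x : ℝ => (1 / γ) * x ^ (1 + β) * Real.log (1 + γ / x))
      (Set.Ioi (0 : ℝ)) := by
  have hpow : StrictMonoOn (fun x : ℝ ↦ 1 / γ * x ^ β) (Ioi 0) := fun a (ha : 0 < a) _ _ hab ↦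
    mul_lt_mul_of_pos_left (rpow_lt_rpow ha.le hab hβ0) (by positivity)
  refine (hpow.mul (strictMonoOn_mul_log_one_add_div hγ0) (fun x (hx : 0 < x) ↦ by positivity)
    (fun x hx ↦ (mul_log_one_add_div_pos hγ0 hx).le)).congr fun x hx ↦ ?_
  simp only [Pi.mul_apply]
  rw [rpow_add hx, rpow_one]
  ring

theorem stmt_1 (β γ : ℝ) (hβ0 : 0 < β) (hβ1 : β ≤ 1) (hγ0 : 0 < γ) (hγ1 : γ ≤ 1) :
    StrictMonoOn (fun x : ℝ => (1 / γ) * x ^ (1 + β) * Real.log (1 + γ / x))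
      (Set.Ioi (0 : ℝ)) :=
  stmt_1_general β γ hβ0 hγ0
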